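/- For every positive integer n, the Rado graph R admits a factorization into n factors each isomorphic to R, and the complete graph K_ℕ on vertex set ℕ admits a factorization into n + 1 factors each isomorphic to R. -/

import Mathlib

/-!
A countable graph with the extension property is isomorphic to the Rado graph, by back and forth.
Colour each edge `{i, j}`, `i < j`, of the Rado graph by `⌊log₂ j⌋ mod n`. Each colour class keeps
the extension property: for large `N`, the vertex `2 ^ N + ∑ u ∈ U, 2 ^ u` is joined to exactly
the vertices of `U` among the smaller ones, all in colour `N mod n`, and `N` may be taken in any
residue class. The complement of the Rado graph has the extension property too, so adding it to
the `n` colour classes factorizes the complete graph.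
-/

/-- The Rado graph on `ℕ`: for `i < j`, `i` and `j` are adjacent iff the `i`-th bit
of the binary representation of `j` is `1`. -/
def Rado : SimpleGraph ℕ :=
  SimpleGraph.fromRel (fun i j => i < j ∧ Nat.testBit j i)

/-- An indexed family `G` of graphs is a factorization of `Λ`: each `G a` is a
(spanning) subgraph of `Λ` and the edge sets of the `G a` partition the edge set
of `Λ`. -/
def IsFactorization {A V : Type*} (Λ : SimpleGraph V) (G : A → SimpleGraph V) : Prop :=
  (∀ a, G a ≤ Λ) ∧ ∀ e ∈ Λ.edgeSet, ∃! a, e ∈ (G a).edgeSet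

namespace SimpleGraph

variable {V W : Type*} {G : SimpleGraph V} {H : SimpleGraph W}

def HasExtensionProperty (G : SimpleGraph V) : Prop :=
  ∀ A B : Finset V, Disjoint A B → ∃ z ∉ B, (∀ a ∈ A, G.Adj z a) ∧ ∀ b ∈ B, ¬G.Adj z b

theorem HasExtensionProperty.compl (hG : G.HasExtensionProperty) : Gᶜ.HasExtensionProperty := by
  intro A B hAB
  obtain ⟨z, hzA, hzB, hzA'⟩ := hG B A hAB.symm
  refine ⟨z, fun hz => (hzB z hz).ne rfl, fun a ha => ?_, fun b hb h => ?_⟩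
  · exact (compl_adj ..).2 ⟨fun h => hzA (h ▸ ha), hzA' a ha⟩
  · exact ((compl_adj ..).1 h).2 (hzB b hb)

/-- `R` is the graph of an adjacency-preserving bijection between its two projections. -/
def IsPartialIso (G : SimpleGraph V) (H : SimpleGraph W) (R : Set (V × W)) : Prop :=
  ∀ p ∈ R, ∀ q ∈ R, (p.1 = q.1 ↔ p.2 = q.2) ∧ (G.Adj p.1 q.1 ↔ H.Adj p.2 q.2)

theorem isPartialIso_insert {R : Set (V × W)} {p : V × W} :
    IsPartialIso G H (insert p R) ↔
      IsPartialIso G H R ∧ ∀ q ∈ R, (p.1 = q.1 ↔ p.2 = q.2) ∧ (G.Adj p.1 q.1 ↔ H.Adj p.2 q.2) := by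
  refine ⟨fun h => ⟨fun q hq r hr => h q (.inr hq) r (.inr hr),
    fun q hq => h p (.inl rfl) q (.inr hq)⟩, fun ⟨hR, hp⟩ => ?_⟩
  simp only [IsPartialIso, Set.forall_mem_insert]
  refine ⟨⟨by simp, fun q hq => hp q hq⟩, fun q hq => ⟨?_, hR q hq⟩⟩
  rw [eq_comm, @eq_comm _ q.2, G.adj_comm, H.adj_comm]
  exact hp q hq

theorem IsPartialIso.symm {R : Set (V × W)} (hR : IsPartialIso G H R) :
    IsPartialIso H G (Prod.swap ⁻¹' R) := fun _ hp _ hq =>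
  ⟨(hR _ hp _ hq).1.symm, (hR _ hp _ hq).2.symm⟩

theorem IsPartialIso.exists_insert_left (hH : H.HasExtensionProperty) {R : Set (V × W)}
    (hfin : R.Finite) (hR : IsPartialIso G H R) (x : V) :
    ∃ y, IsPartialIso G H (insert (x, y) R) := by
  classical
  obtain ⟨R, rfl⟩ := hfin.exists_finset_coe
  by_cases hx : ∃ y, (x, y) ∈ R
  · obtain ⟨y, hy⟩ := hx
    exact ⟨y, by rwa [Set.insert_eq_of_mem (Finset.mem_coe.2 hy)]⟩
  push Not at hx
  -- `x` goes to a vertex adjacent exactly to the images of the neighbours of `x`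
  let A := (R.filter fun p => G.Adj x p.1).image Prod.snd
  obtain ⟨z, hz, hzA, hzB⟩ := hH A (R.image Prod.snd \ A) Finset.disjoint_sdiff
  have hzR : z ∉ R.image Prod.snd := fun hz' =>
    if hA : z ∈ A then (hzA z hA).ne rfl else hz (Finset.mem_sdiff.2 ⟨hz', hA⟩)
  have hxA : ∀ q ∈ R, G.Adj x q.1 ↔ q.2 ∈ A := fun q hq => by
    refine ⟨fun h => Finset.mem_image.2 ⟨q, Finset.mem_filter.2 ⟨hq, h⟩, rfl⟩, fun h => ?_⟩
    obtain ⟨p, hp, hpq⟩ := Finset.mem_image.1 h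
    rw [Finset.mem_filter] at hp
    rw [← (hR p hp.1 q hq).1.2 hpq]
    exact hp.2
  have hzA' : ∀ q ∈ R, H.Adj z q.2 ↔ q.2 ∈ A := fun q hq =>
    ⟨fun h => by_contra fun hA => hzB _ (Finset.mem_sdiff.2 ⟨Finset.mem_image_of_mem _ hq, hA⟩) h,
      hzA _⟩
  refine ⟨z, isPartialIso_insert.2 ⟨hR, fun q hq => ⟨iff_of_false ?_ ?_, ?_⟩⟩⟩
  · exact fun h => hx q.2 (by rw [show x = q.1 from h]; exact hq)
  · exact fun h => hzR (Finset.mem_image.2 ⟨q, hq, h.symm⟩)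
  · exact (hxA q hq).trans (hzA' q hq).symm

theorem IsPartialIso.exists_insert_right (hG : G.HasExtensionProperty) {R : Set (V × W)}
    (hfin : R.Finite) (hR : IsPartialIso G H R) (y : W) :
    ∃ x, IsPartialIso G H (insert (x, y) R) := by
  obtain ⟨x, hx⟩ := hR.symm.exists_insert_left hG (hfin.preimage Prod.swap_injective.injOn) y
  refine ⟨x, ?_⟩
  convert hx.symm
  ext ⟨a, b⟩
  simp [and_comm]

theorem IsPartialIso.nonempty_iso {R : Set (V × W)} (hR : IsPartialIso G H R)
    (hl : ∀ x, ∃ y, (x, y) ∈ R) (hr : ∀ y, ∃ x, (x, y) ∈ R) : Nonempty (G ≃g H) := by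
  choose f hf using hl
  choose g hg using hr
  exact ⟨⟨⟨f, g, fun x => (hR _ (hg (f x)) _ (hf x)).1.2 rfl,
    fun y => (hR _ (hf (g y)) _ (hg y)).1.1 rfl⟩, fun {x x'} => (hR _ (hf x) _ (hf x')).2.symm⟩⟩

theorem HasExtensionProperty.nonempty_iso [Countable V] [Countable W]
    (hG : G.HasExtensionProperty) (hH : H.HasExtensionProperty) : Nonempty (G ≃g H) := by
  cases nonempty_encodable V
  cases nonempty_encodable W
  let P := {R : Set (V × W) // R.Finite ∧ IsPartialIso G H R}
  let definedAt : V ⊕ W → Order.Cofinal P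
    | .inl x => ⟨{R | ∃ y, (x, y) ∈ R.1}, fun R => by
        obtain ⟨y, hy⟩ := R.2.2.exists_insert_left hH R.2.1 x
        exact ⟨⟨_, R.2.1.insert _, hy⟩, ⟨y, .inl rfl⟩, Set.subset_insert _ _⟩⟩
    | .inr y => ⟨{R | ∃ x, (x, y) ∈ R.1}, fun R => by
        obtain ⟨x, hx⟩ := R.2.2.exists_insert_right hG R.2.1 y
        exact ⟨⟨_, R.2.1.insert _, hx⟩, ⟨x, .inl rfl⟩, Set.subset_insert _ _⟩⟩
  -- a directed family of finite partial isomorphisms meeting every `definedAt`: its union is a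
  -- partial isomorphism that is total and onto
  let I := Order.idealOfCofinals (⟨∅, Set.finite_empty, by simp [IsPartialIso]⟩ : P) definedAt
  refine IsPartialIso.nonempty_iso (R := {p | ∃ R ∈ I, p ∈ R.1}) ?_ (fun x => ?_) (fun y => ?_)
  · rintro p ⟨R, hR, hp⟩ q ⟨S, hS, hq⟩
    obtain ⟨T, -, hRT, hST⟩ := I.directed _ hR _ hS
    exact T.2.2 p (hRT hp) q (hST hq)
  · obtain ⟨R, ⟨y, hy⟩, hR⟩ := Order.cofinal_meets_idealOfCofinals _ definedAt (.inl x)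
    exact ⟨y, R, hR, hy⟩
  · obtain ⟨R, ⟨x, hx⟩, hR⟩ := Order.cofinal_meets_idealOfCofinals _ definedAt (.inr y)
    exact ⟨x, R, hR, hx⟩

end SimpleGraph

open SimpleGraph

theorem isFactorization_fromEdgeSet_fiber {A V : Type*} (Λ : SimpleGraph V) (c : Sym2 V → A) :
    IsFactorization Λ fun a => fromEdgeSet (Λ.edgeSet ∩ {e | c e = a}) := by
  refine ⟨fun a => (fromEdgeSet_le _).2 fun e he => he.1.1,
    fun e he => ⟨c e, ?_, fun a ha => ?_⟩⟩
  · simp only [edgeSet_fromEdgeSet]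
    exact ⟨⟨he, rfl⟩, Λ.not_isDiag_of_mem_edgeSet he⟩
  · simp only [edgeSet_fromEdgeSet] at ha
    exact ha.1.2.symm

theorem IsFactorization.cons_compl {V : Type*} {n : ℕ} {Λ : SimpleGraph V}
    {G : Fin n → SimpleGraph V} (h : IsFactorization Λ G) :
    IsFactorization ⊤ (Fin.cons Λᶜ G : Fin (n + 1) → SimpleGraph V) := by
  refine ⟨fun _ => le_top, fun e he => ?_⟩
  have hcompl : e ∈ Λᶜ.edgeSet ↔ e ∉ Λ.edgeSet := by
    rw [← top_sdiff, edgeSet_sdiff]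
    exact and_iff_right he
  by_cases hΛ : e ∈ Λ.edgeSet
  · obtain ⟨a, ha, huniq⟩ := h.2 e hΛ
    refine ⟨a.succ, by simpa using ha, fun b hb => ?_⟩
    cases b using Fin.cases with
    | zero => exact absurd hΛ (hcompl.1 (by simpa using hb))
    | succ b => simpa using huniq b (by simpa using hb)
  · refine ⟨0, by simpa using hcompl.2 hΛ, fun b hb => ?_⟩
    cases b using Fin.cases with
    | zero => rfl
    | succ b => exact absurd (edgeSet_mono (h.1 b) (by simpa using hb)) hΛ

theorem Nat.testBit_sum_two_pow (s : Finset ℕ) (i : ℕ) :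
    (∑ k ∈ s, 2 ^ k).testBit i ↔ i ∈ s := by
  rw [← Nat.mem_bitIndices, ← List.mem_toFinset, Finset.toFinset_bitIndices_sum_two_pow]

theorem Nat.log_sum_two_pow_insert {s : Finset ℕ} {N : ℕ} (hN : ∀ k ∈ s, k < N) :
    Nat.log 2 (∑ k ∈ insert N s, 2 ^ k) = N :=
  Nat.log_eq_of_pow_le_of_lt_pow
    (Finset.single_le_sum (fun _ _ => Nat.zero_le _) (Finset.mem_insert_self N s))
    (Nat.geomSum_lt le_rfl fun k hk => Nat.lt_succ_of_le <| by
      rcases Finset.mem_insert.1 hk with rfl | hk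
      exacts [le_rfl, (hN k hk).le])

theorem Fin.exists_gt_ofNat_eq {n : ℕ} [NeZero n] (m : ℕ) (a : Fin n) :
    ∃ N, m < N ∧ Fin.ofNat n N = a := by
  refine ⟨n * (m + 1) + a, ?_, Fin.ext ?_⟩
  · have := Nat.le_mul_of_pos_left (m + 1) (Nat.pos_of_neZero n)
    omega
  · simp [Nat.mod_eq_of_lt a.isLt]

theorem rado_adj_of_lt {i j : ℕ} (h : i < j) : Rado.Adj j i ↔ j.testBit i := by
  simp [Rado, h, h.ne', h.not_gt]

def radoSlice (n : ℕ) [NeZero n] (a : Fin n) : SimpleGraph ℕ :=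
  fromEdgeSet (Rado.edgeSet ∩ {e | Fin.ofNat n (Nat.log 2 e.sup) = a})

theorem radoSlice_adj_of_lt {n : ℕ} [NeZero n] {a : Fin n} {i j : ℕ} (h : i < j) :
    (radoSlice n a).Adj j i ↔ j.testBit i ∧ Fin.ofNat n (Nat.log 2 j) = a := by
  simp [radoSlice, ← rado_adj_of_lt h, h.ne', max_eq_left h.le]

theorem radoSlice_one : radoSlice 1 0 = Rado := by
  simp [radoSlice, Subsingleton.elim _ (0 : Fin 1)]

theorem hasExtensionProperty_radoSlice {n : ℕ} [NeZero n] (a : Fin n) :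
    (radoSlice n a).HasExtensionProperty := by
  intro A B hAB
  obtain ⟨N, hN, hNa⟩ := Fin.exists_gt_ofNat_eq ((A ∪ B).sup id) a
  replace hN : ∀ k ∈ A ∪ B, k < N := fun k hk => (Finset.le_sup (f := id) hk).trans_lt hN
  set z := ∑ k ∈ insert N A, 2 ^ k
  have hlt : ∀ k ∈ A ∪ B, k < z := fun k hk =>
    (hN k hk).trans (Finset.lt_geomSum_of_mem le_rfl (Finset.mem_insert_self N A))
  have hlog : Nat.log 2 z = N :=
    Nat.log_sum_two_pow_insert fun k hk => hN k (Finset.mem_union_left B hk)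
  refine ⟨z, fun hz => (hlt z (Finset.mem_union_right A hz)).false, fun u hu => ?_,
    fun b hb => ?_⟩
  · rw [radoSlice_adj_of_lt (hlt u (Finset.mem_union_left B hu)), Nat.testBit_sum_two_pow, hlog]
    exact ⟨Finset.mem_insert_of_mem hu, hNa⟩
  · rw [radoSlice_adj_of_lt (hlt b (Finset.mem_union_right A hb)), Nat.testBit_sum_two_pow,
      Finset.mem_insert]
    rintro ⟨rfl | hbA, -⟩
    · exact (hN _ (Finset.mem_union_right A hb)).false
    · exact Finset.disjoint_left.1 hAB hbA hb

theorem hasExtensionProperty_rado : Rado.HasExtensionProperty :=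
  radoSlice_one ▸ hasExtensionProperty_radoSlice 0

/-- for every `n ≥ 1`, the Rado graph can be factorized into `n`
copies of itself, and the complete graph `K_ℕ` can be factorized into `n + 1`
copies of the Rado graph. -/
theorem stmt_4 (n : ℕ) (hn : 1 ≤ n) :
    (∃ G : Fin n → SimpleGraph ℕ, IsFactorization Rado G ∧
        ∀ i, Nonempty (Rado ≃g G i)) ∧
      ∃ G : Fin (n + 1) → SimpleGraph ℕ, IsFactorization (⊤ : SimpleGraph ℕ) G ∧
        ∀ i, Nonempty (Rado ≃g G i) := by
  have : NeZero n := ⟨by omega⟩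
  have hfac : IsFactorization Rado (radoSlice n) := isFactorization_fromEdgeSet_fiber Rado _
  have hslice (a : Fin n) : Nonempty (Rado ≃g radoSlice n a) :=
    hasExtensionProperty_rado.nonempty_iso (hasExtensionProperty_radoSlice a)
  refine ⟨⟨radoSlice n, hfac, hslice⟩, Fin.cons Radoᶜ (radoSlice n), hfac.cons_compl, ?_⟩
  refine Fin.cases ?_ fun a => by simpa using hslice a
  simpa using hasExtensionProperty_rado.nonempty_iso hasExtensionProperty_rado.compl
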